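/- Let Φ_α(x,y) = (φ_α(x), 1/(d_α(x) + sign(x)·y)) be the natural extension of the α-odd-continued-fraction Gauss map. Then for every irrational x ∈ I_α and every n ≥ 0, Φ_α^n(x, 0) = (φ_α^n(x), q_{n−1}(x;α)/q_n(x;α)). In particular q_n(x;α) > 0 for all n ≥ 1. -/

import Mathlib

/-- The digit function of the α-OCF Gauss map. -/
noncomputable def dA (α x : ℝ) : ℤ := 2 * ⌊1/(2*|x|) + (1-α)/2⌋ + 1

/-- The α-OCF Gauss map φ_α(x) = 1/|x| − d_α(x). -/
noncomputable def phiA (α : ℝ) (x : ℝ) : ℝ := 1/|x| - dA α x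

/-- Two-step linear recursion r 0 = a, r 1 = b, r (n+2) = c n * r (n+1) + s n * r n. -/
noncomputable def rec2 (a b : ℝ) (c s : ℕ → ℝ) : ℕ → ℝ
  | 0 => a
  | 1 => b
  | (n+2) => c n * rec2 a b c s (n+1) + s n * rec2 a b c s n

/-- Shifted convergent numerators of the α-OCF expansion of x: `Pc α x n = p_{n-1}(x;α)`. -/
noncomputable def Pc (α x : ℝ) : ℕ → ℝ :=
  rec2 1 0 (fun i => (dA α ((phiA α)^[i] x) : ℝ)) (fun i => Real.sign ((phiA α)^[i] x))

/-- Shifted convergent denominators of the α-OCF expansion of x: `Qc α x n = q_{n-1}(x;α)`. -/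
noncomputable def Qc (α x : ℝ) : ℕ → ℝ :=
  rec2 0 1 (fun i => (dA α ((phiA α)^[i] x) : ℝ)) (fun i => Real.sign ((phiA α)^[i] x))

/-- The natural extension Φ_α(x,y) = (φ_α(x), 1/(d_α(x) + sign(x)·y)). -/
noncomputable def PhiA (α : ℝ) (p : ℝ × ℝ) : ℝ × ℝ :=
  (phiA α p.1, 1/((dA α p.1 : ℝ) + Real.sign p.1 * p.2))

/-!
Write φ for the golden ratio. Along the orbit, `Φ_α^n(x, 0) = (x_n, y_n)` stays in the region
`Ω_α = [α - 2, α) × [0, φ]` minus the corner `{x < φ - 2, y > 2 - φ}`. On `Ω_α` the denominator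
`D = d_α(x) + sign(x) y` is at least `φ - 1 = 1/φ > 0`, so `q_{n+1} = q_n D` stays positive and
`y_{n+1} = 1/D = q_n/q_{n+1}`. `Ω_α` is invariant: `1/D > 2 - φ` means `D < φ + 1 = φ²`, which forces
`d_α(x) = 1`, or `d_α(x) = 3` when `x < 0` and `y > 2 - φ` (then `|x| ≤ 2 - φ`); as `|x| ≤ φ`
always, either way `φ_α(x) = 1/|x| - d_α(x) ≥ φ - 2`.
-/

open Set
open scoped goldenRatio

lemma three_halves_lt_goldenRatio : 3 / 2 < φ := by
  nlinarith [Real.goldenRatio_sq, Real.one_lt_goldenRatio]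

lemma irrational_phiA {x : ℝ} (hx : Irrational x) (α : ℝ) : Irrational (phiA α x) := by
  have habs : Irrational |x| := by
    rcases abs_choice x with h | h <;> rw [h]
    exacts [hx, hx.neg]
  simpa only [phiA, one_div] using habs.inv.sub_intCast (dA α x)

lemma dA_odd (α x : ℝ) : Odd (dA α x) := ⟨_, rfl⟩

section Digits

variable {α x : ℝ}

lemma le_dA_iff (k : ℤ) : 2 * k + 1 ≤ dA α x ↔ 2 * k + α - 1 ≤ 1 / |x| := by
  have half : 1 / (2 * |x|) = 1 / |x| / 2 := by rw [div_div, mul_comm]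
  rw [dA, add_le_add_iff_right, mul_le_mul_iff_right₀ two_pos, Int.le_floor, half]
  constructor <;> intro h <;> linarith

lemma phiA_mem_Ico (hx : x ≠ 0) : phiA α x ∈ Ico (α - 2) α := by
  have hfract : phiA α x = 2 * Int.fract (1 / (2 * |x|) + (1 - α) / 2) + α - 2 := by
    have : |x| ≠ 0 := abs_ne_zero.mpr hx
    simp only [phiA, dA, Int.fract]
    push_cast
    field_simp
    ring
  rw [hfract]
  constructor <;> linarith [Int.fract_nonneg (1 / (2 * |x|) + (1 - α) / 2),
    Int.fract_lt_one (1 / (2 * |x|) + (1 - α) / 2)]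

lemma abs_le_goldenRatio (hα : α ∈ Icc (φ - 1) φ) (hx : x ∈ Ico (α - 2) α) : |x| ≤ φ := by
  rw [abs_le]
  constructor <;> linarith [hα.1, hα.2, hx.1, hx.2, three_halves_lt_goldenRatio]

lemma one_le_dA (hα : α ≤ φ) (hx : x ∈ Ico (α - 2) α) (hx0 : x ≠ 0) : 1 ≤ dA α x := by
  rw [show (1 : ℤ) = 2 * 0 + 1 from rfl, le_dA_iff, le_div_iff₀ (abs_pos.2 hx0)]
  push_cast
  rcases le_or_gt α 1 with h | h
  · nlinarith [abs_nonneg x]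
  rcases abs_choice x with habs | habs <;> rw [habs]
  · nlinarith [hx.2, Real.goldenRatio_sq]
  · nlinarith [hx.1, sq_nonneg (α - 3 / 2)]

lemma three_le_dA (hα : α ≤ φ) (hx0 : x ≠ 0) (hx : |x| ≤ 2 - φ) : 3 ≤ dA α x := by
  rw [show (3 : ℤ) = 2 * 1 + 1 from rfl, le_dA_iff, le_div_iff₀ (abs_pos.2 hx0)]
  push_cast
  nlinarith [Real.goldenRatio_sq, abs_nonneg x]

end Digits

def natExtDomain (α : ℝ) : Set (ℝ × ℝ) :=
  {p | p.1 ∈ Ico (α - 2) α ∧ p.2 ∈ Icc 0 φ ∧ (2 - φ < p.2 → φ - 2 ≤ p.1)}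

noncomputable def natExtDenom (α : ℝ) (p : ℝ × ℝ) : ℝ := dA α p.1 + Real.sign p.1 * p.2

section NaturalExtension

variable {α : ℝ}

lemma PhiA_eq (p : ℝ × ℝ) : PhiA α p = (phiA α p.1, 1 / natExtDenom α p) := rfl

lemma sign_mul_cases_of_mem_natExtDomain {x y : ℝ} (hp : (x, y) ∈ natExtDomain α) :
    φ - 2 ≤ Real.sign x * y ∨ -φ ≤ Real.sign x * y ∧ |x| ≤ 2 - φ := by
  obtain ⟨hx, ⟨hy0, hyφ⟩, hcorner⟩ := hp
  have hφ2 := Real.goldenRatio_lt_two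
  rcases lt_trichotomy x 0 with hneg | rfl | hpos
  · rw [Real.sign_of_neg hneg, abs_of_neg hneg]
    rcases le_or_gt y (2 - φ) with hy | hy
    · left; linarith
    · right; exact ⟨by linarith, by linarith [hcorner hy]⟩
  · left; simp [hφ2.le]
  · left
    rw [Real.sign_of_pos hpos]
    linarith

lemma natExtDenom_bounds (hα : α ∈ Icc (φ - 1) φ) {p : ℝ × ℝ} (hp : p ∈ natExtDomain α)
    (hx0 : p.1 ≠ 0) :
    φ - 1 ≤ natExtDenom α p ∧ (natExtDenom α p < φ + 1 → φ - 2 ≤ phiA α p.1) := by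
  obtain ⟨x, y⟩ := p
  obtain ⟨m, hm⟩ := dA_odd α x
  have hd1 : 1 ≤ dA α x := one_le_dA hα.2 hp.1 hx0
  have hφ2 := Real.goldenRatio_lt_two
  have hpos := abs_pos.2 hx0
  simp only [natExtDenom, phiA] at hx0 ⊢
  rcases sign_mul_cases_of_mem_natExtDomain hp with hsy | ⟨hsy, hsmall⟩
  · refine ⟨by linarith [(show (1 : ℝ) ≤ dA α x by exact_mod_cast hd1)], fun hD => ?_⟩
    have hd : dA α x = 1 := by
      have : (dA α x : ℝ) < 3 := by linarith
      have : dA α x < 3 := by exact_mod_cast this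
      omega
    have hxφ := abs_le_goldenRatio hα hp.1
    rw [hd, Int.cast_one, le_sub_iff_add_le, le_div_iff₀ hpos]
    nlinarith [Real.goldenRatio_sq]
  · have hd3 := three_le_dA hα.2 hx0 hsmall
    refine ⟨by linarith [(show (3 : ℝ) ≤ dA α x by exact_mod_cast hd3)], fun hD => ?_⟩
    have hd : dA α x = 3 := by
      have : (dA α x : ℝ) < 5 := by linarith
      have : dA α x < 5 := by exact_mod_cast this
      omega
    rw [hd, Int.cast_ofNat, le_sub_iff_add_le, le_div_iff₀ hpos]
    nlinarith [Real.goldenRatio_sq]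

lemma natExtDenom_pos (hα : α ∈ Icc (φ - 1) φ) {p : ℝ × ℝ} (hp : p ∈ natExtDomain α)
    (hx0 : p.1 ≠ 0) : 0 < natExtDenom α p := by
  linarith [(natExtDenom_bounds hα hp hx0).1, Real.one_lt_goldenRatio]

lemma mapsTo_PhiA (hα : α ∈ Icc (φ - 1) φ) :
    MapsTo (PhiA α) {p | p ∈ natExtDomain α ∧ Irrational p.1}
      {p | p ∈ natExtDomain α ∧ Irrational p.1} := by
  rintro p ⟨hp, hirr⟩
  obtain ⟨hlow, hup⟩ := natExtDenom_bounds hα hp hirr.ne_zero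
  have hDpos := natExtDenom_pos hα hp hirr.ne_zero
  rw [PhiA_eq]
  refine ⟨⟨phiA_mem_Ico hirr.ne_zero, ⟨by positivity, ?_⟩, fun hy => hup ?_⟩,
    irrational_phiA hirr α⟩
  · rw [div_le_iff₀ hDpos]
    nlinarith [Real.goldenRatio_sq, Real.goldenRatio_pos]
  · rw [lt_div_iff₀ hDpos] at hy
    nlinarith [Real.goldenRatio_sq, Real.goldenRatio_lt_two]

end NaturalExtension

section Convergents

variable {α x : ℝ}

lemma Qc_add_two (n : ℕ) : Qc α x (n + 2) =
    dA α ((phiA α)^[n] x) * Qc α x (n + 1) + Real.sign ((phiA α)^[n] x) * Qc α x n := rfl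

lemma iterate_PhiA_eq (hpos : ∀ n, 0 < natExtDenom α ((PhiA α)^[n] (x, 0))) (n : ℕ) :
    (PhiA α)^[n] (x, 0) = ((phiA α)^[n] x, Qc α x n / Qc α x (n + 1)) ∧ 0 < Qc α x (n + 1) := by
  induction n with
  | zero => simp [Qc, rec2]
  | succ n ih =>
    obtain ⟨hiter, hQ⟩ := ih
    have hD := hpos n
    rw [hiter] at hD
    have hQ2 : Qc α x (n + 2) =
        Qc α x (n + 1) * natExtDenom α ((phiA α)^[n] x, Qc α x n / Qc α x (n + 1)) := by
      rw [Qc_add_two, natExtDenom]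
      field_simp
    refine ⟨?_, hQ2 ▸ mul_pos hQ hD⟩
    rw [Function.iterate_succ_apply', hiter, PhiA_eq, Function.iterate_succ_apply', hQ2,
      ← div_div, div_self hQ.ne']

end Convergents

/-- Φ_αⁿ(x,0) = (φ_αⁿ(x), q_{n−1}/q_n); in particular q_n > 0 for n ≥ 1. -/
theorem stmt15 (α x : ℝ)
    (hα : α ∈ Set.Icc ((Real.sqrt 5 - 1)/2) ((Real.sqrt 5 + 1)/2))
    (hx : Irrational x) (hxI : x ∈ Set.Ico (α-2) α) :
    (∀ n : ℕ, (PhiA α)^[n] (x, 0) = ((phiA α)^[n] x, Qc α x n / Qc α x (n+1))) ∧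
    (∀ n : ℕ, 1 ≤ n → 0 < Qc α x (n+1)) := by
  have hαφ : α ∈ Icc (φ - 1) φ := by
    rw [Real.goldenRatio]
    constructor <;> linarith [hα.1, hα.2]
  have hstart : (x, 0) ∈ {p : ℝ × ℝ | p ∈ natExtDomain α ∧ Irrational p.1} :=
    ⟨⟨hxI, ⟨le_rfl, Real.goldenRatio_pos.le⟩, fun h => by linarith [Real.goldenRatio_lt_two]⟩, hx⟩
  have hpos (n : ℕ) : 0 < natExtDenom α ((PhiA α)^[n] (x, 0)) := by
    obtain ⟨hdom, hirr⟩ := (mapsTo_PhiA hαφ).iterate n hstart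
    exact natExtDenom_pos hαφ hdom hirr.ne_zero
  exact ⟨fun n => (iterate_PhiA_eq hpos n).1, fun n _ => (iterate_PhiA_eq hpos n).2⟩
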